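/- Suppose A satisfies the RIP of order K with constant δ_K, and E is a perturbation matrix with ε := ‖E‖₂^{(K)} / ‖A‖₂^{(K)}, where ‖·‖₂^{(K)} denotes the largest spectral norm over all K-column submatrices. Then the matrix à = A + E satisfies the RIP of order K with constant δ̃_K ≤ (1+δ_K)(1+ε)² − 1. -/

import Mathlib

open Matrix Finset

/-- The ℓ₂ norm of a finite real vector. -/
noncomputable def l2 {n : ℕ} (v : Fin n → ℝ) : ℝ := Real.sqrt (∑ i, (v i) ^ 2)

/-- The ℓ₁ norm of a finite real vector. -/
noncomputable def l1 {n : ℕ} (v : Fin n → ℝ) : ℝ := ∑ i, |v i|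

/-- A vector is `K`-sparse if it has at most `K` nonzero entries. -/
def IsSparse {n : ℕ} (K : ℕ) (v : Fin n → ℝ) : Prop :=
  ∃ S : Finset (Fin n), S.card ≤ K ∧ ∀ i ∉ S, v i = 0

/-- `A` satisfies the RIP of order `K` with constant `δ`. -/
def SatisfiesRIP {m n : ℕ} (A : Matrix (Fin m) (Fin n) ℝ) (K : ℕ) (δ : ℝ) : Prop :=
  ∀ v : Fin n → ℝ, IsSparse K v →
    (1 - δ) * (l2 v) ^ 2 ≤ (l2 (A.mulVec v)) ^ 2 ∧
      (l2 (A.mulVec v)) ^ 2 ≤ (1 + δ) * (l2 v) ^ 2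

/-- Spectral norm (ℓ₂ operator norm) of a matrix. -/
noncomputable def specNorm {m n : ℕ} (A : Matrix (Fin m) (Fin n) ℝ) : ℝ :=
  sSup {c | ∃ v : Fin n → ℝ, l2 v ≤ 1 ∧ c = l2 (A.mulVec v)}

/-- The matrix with the columns of `A` indexed by `S` kept and all other columns zeroed,
representing the column-submatrix `A_S`. -/
def colRestrict {m n : ℕ} (A : Matrix (Fin m) (Fin n) ℝ) (S : Finset (Fin n)) :
    Matrix (Fin m) (Fin n) ℝ := fun i j => if j ∈ S then A i j else 0

/-- `‖A‖₂^{(K)}`: the largest spectral norm over all `K`-column submatrices of `A`. -/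
noncomputable def subNorm {m n : ℕ} (A : Matrix (Fin m) (Fin n) ℝ) (K : ℕ) : ℝ :=
  sSup {c | ∃ S : Finset (Fin n), S.card = K ∧ c = specNorm (colRestrict A S)}

/-- The pseudo-inverse `(BᵀB)⁻¹Bᵀ` of a full-column-rank matrix `B`. -/
noncomputable def pinv {m k : ℕ} (B : Matrix (Fin m) (Fin k) ℝ) : Matrix (Fin k) (Fin m) ℝ :=
  (Bᵀ * B)⁻¹ * Bᵀ

/-- `sK` is a best `K`-term (ℓ₂) approximation of `s`. -/
def IsBestApprox {n : ℕ} (K : ℕ) (s sK : Fin n → ℝ) : Prop :=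
  IsSparse K sK ∧ ∀ t : Fin n → ℝ, IsSparse K t → l2 (s - sK) ≤ l2 (s - t)

/-- Embed a vector indexed by `Fin k` into `Fin n` along an injection `f` (zero elsewhere). -/
noncomputable def embedVec {k n : ℕ} (f : Fin k → Fin n) (w : Fin k → ℝ) : Fin n → ℝ :=
  fun j => ∑ i, if f i = j then w i else 0

/-!
On `K`-sparse vectors, `‖E v‖ ≤ ‖E‖₂^{(K)} ‖v‖ = ε ‖A‖₂^{(K)} ‖v‖ ≤ ε √(1+δ) ‖v‖`, because the upper
RIP bound of `A` gives `‖A‖₂^{(K)} ≤ √(1+δ)`. The triangle inequality then yields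
`‖(A+E) v‖ ≤ (1+ε) √(1+δ) ‖v‖`, while `‖A v‖ ≤ ‖(A+E) v‖ + ‖E v‖` yields
`‖(A+E) v‖² ≥ ‖A v‖² - 2 ‖A v‖ ‖E v‖ ≥ (1 - δ - 2ε(1+δ)) ‖v‖² ≥ (2 - (1+δ)(1+ε)²) ‖v‖²`.
-/

lemma l2_nonneg {n : ℕ} (v : Fin n → ℝ) : 0 ≤ l2 v := Real.sqrt_nonneg _

lemma l2_eq_norm {n : ℕ} (v : Fin n → ℝ) : l2 v = ‖WithLp.toLp 2 v‖ := by
  simp [l2, EuclideanSpace.norm_eq]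

lemma l2_add_le {n : ℕ} (v w : Fin n → ℝ) : l2 (v + w) ≤ l2 v + l2 w := by
  simpa only [l2_eq_norm, WithLp.toLp_add] using norm_add_le _ _

lemma l2_sub_le {n : ℕ} (v w : Fin n → ℝ) : l2 (v - w) ≤ l2 v + l2 w := by
  simpa only [l2_eq_norm, WithLp.toLp_sub] using norm_sub_le _ _

lemma l2_indicator_le {n : ℕ} (s : Set (Fin n)) (v : Fin n → ℝ) : l2 (s.indicator v) ≤ l2 v := by
  apply Real.sqrt_le_sqrt
  refine Finset.sum_le_sum fun j _ => ?_
  by_cases hj : j ∈ s <;> simp [hj, sq_nonneg]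

lemma specNorm_eq_opNorm {m n : ℕ} (B : Matrix (Fin m) (Fin n) ℝ) :
    specNorm B = ‖LinearMap.toContinuousLinearMap (toEuclideanLin B)‖ := by
  rw [← ContinuousLinearMap.sSup_unitClosedBall_eq_norm, specNorm]
  congr 1
  ext c
  constructor
  · rintro ⟨v, hv, rfl⟩
    exact ⟨WithLp.toLp 2 v, by simpa [l2_eq_norm] using hv, by simp [l2_eq_norm]⟩
  · rintro ⟨x, hx, rfl⟩
    exact ⟨x.ofLp, by simpa [l2_eq_norm] using hx, by rw [l2_eq_norm]; rfl⟩

lemma l2_mulVec_le {m n : ℕ} (B : Matrix (Fin m) (Fin n) ℝ) (v : Fin n → ℝ) :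
    l2 (B *ᵥ v) ≤ specNorm B * l2 v := by
  simpa [specNorm_eq_opNorm, l2_eq_norm] using
    (LinearMap.toContinuousLinearMap (toEuclideanLin B)).le_opNorm (WithLp.toLp 2 v)

lemma isSparse_indicator {n K : ℕ} {S : Finset (Fin n)} (hS : S.card ≤ K) (v : Fin n → ℝ) :
    IsSparse K ((S : Set (Fin n)).indicator v) :=
  ⟨S, hS, fun _ hi => Set.indicator_of_notMem (Finset.mem_coe.not.mpr hi) v⟩

lemma IsSparse.exists_card_eq {n K : ℕ} {v : Fin n → ℝ} (hv : IsSparse K v) (hK : K ≤ n) :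
    ∃ S : Finset (Fin n), S.card = K ∧ ∀ i ∉ S, v i = 0 := by
  obtain ⟨S, hS, hv⟩ := hv
  obtain ⟨T, hST, hT⟩ := Finset.exists_superset_card_eq hS (by simpa using hK)
  exact ⟨T, hT, fun i hi => hv i fun hiS => hi (hST hiS)⟩

lemma colRestrict_mulVec {m n : ℕ} (B : Matrix (Fin m) (Fin n) ℝ) (S : Finset (Fin n))
    (v : Fin n → ℝ) : colRestrict B S *ᵥ v = B *ᵥ (S : Set (Fin n)).indicator v := by
  ext i
  simp only [mulVec, dotProduct]
  refine Finset.sum_congr rfl fun j _ => ?_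
  by_cases hj : j ∈ S <;> simp [colRestrict, hj]

lemma subNorm_bddAbove {m n : ℕ} (B : Matrix (Fin m) (Fin n) ℝ) (K : ℕ) :
    BddAbove {c | ∃ S : Finset (Fin n), S.card = K ∧ c = specNorm (colRestrict B S)} :=
  Set.Finite.bddAbove <|
    (Set.finite_range fun S : Finset (Fin n) => specNorm (colRestrict B S)).subset
      fun _ ⟨S, _, hc⟩ => ⟨S, hc.symm⟩

lemma subNorm_nonneg {m n : ℕ} (B : Matrix (Fin m) (Fin n) ℝ) (K : ℕ) : 0 ≤ subNorm B K :=
  Real.sSup_nonneg fun _ ⟨S, _, hc⟩ => hc ▸ specNorm_eq_opNorm (colRestrict B S) ▸ norm_nonneg _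

lemma specNorm_colRestrict_le_subNorm {m n K : ℕ} (B : Matrix (Fin m) (Fin n) ℝ)
    {S : Finset (Fin n)} (hS : S.card = K) : specNorm (colRestrict B S) ≤ subNorm B K :=
  le_csSup (subNorm_bddAbove B K) ⟨S, hS, rfl⟩

-- For `K > n` there is no `K`-column submatrix, and `sSup ∅ = 0`.
lemma le_of_subNorm_pos {m n K : ℕ} {B : Matrix (Fin m) (Fin n) ℝ} (hB : 0 < subNorm B K) :
    K ≤ n := by
  by_contra! hn
  have hempty : {c | ∃ S : Finset (Fin n), S.card = K ∧ c = specNorm (colRestrict B S)} = ∅ :=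
    Set.eq_empty_of_forall_notMem fun _ ⟨S, hS, _⟩ =>
      hn.not_ge (hS ▸ S.card_le_univ.trans_eq (Fintype.card_fin n))
  simp [subNorm, hempty] at hB

lemma l2_mulVec_le_subNorm {m n K : ℕ} (B : Matrix (Fin m) (Fin n) ℝ) (hK : K ≤ n)
    {v : Fin n → ℝ} (hv : IsSparse K v) : l2 (B *ᵥ v) ≤ subNorm B K * l2 v := by
  obtain ⟨S, hS, hsupp⟩ := hv.exists_card_eq hK
  have hBv : B *ᵥ v = colRestrict B S *ᵥ v := by
    rw [colRestrict_mulVec, Set.indicator_eq_self.mpr fun i hi => by_contra fun h => hi (hsupp i h)]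
  calc l2 (B *ᵥ v) ≤ specNorm (colRestrict B S) * l2 v := hBv ▸ l2_mulVec_le _ _
    _ ≤ subNorm B K * l2 v :=
      mul_le_mul_of_nonneg_right (specNorm_colRestrict_le_subNorm B hS) (l2_nonneg v)

lemma SatisfiesRIP.l2_mulVec_le {m n K : ℕ} {A : Matrix (Fin m) (Fin n) ℝ} {δ : ℝ}
    (h : SatisfiesRIP A K δ) {v : Fin n → ℝ} (hv : IsSparse K v) :
    l2 (A *ᵥ v) ≤ √(1 + δ) * l2 v :=
  calc l2 (A *ᵥ v) = √(l2 (A *ᵥ v) ^ 2) := (Real.sqrt_sq (l2_nonneg _)).symm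
    _ ≤ √((1 + δ) * l2 v ^ 2) := Real.sqrt_le_sqrt (h v hv).2
    _ = √(1 + δ) * l2 v := by rw [Real.sqrt_mul' _ (sq_nonneg _), Real.sqrt_sq (l2_nonneg _)]

lemma SatisfiesRIP.subNorm_le_sqrt {m n K : ℕ} {A : Matrix (Fin m) (Fin n) ℝ} {δ : ℝ}
    (h : SatisfiesRIP A K δ) : subNorm A K ≤ √(1 + δ) := by
  refine Real.sSup_le ?_ (Real.sqrt_nonneg _)
  rintro _ ⟨S, hS, rfl⟩
  refine Real.sSup_le ?_ (Real.sqrt_nonneg _)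
  rintro _ ⟨v, hv, rfl⟩
  rw [colRestrict_mulVec]
  exact (h.l2_mulVec_le (isSparse_indicator hS.le v)).trans
    (mul_le_of_le_one_right (Real.sqrt_nonneg _) ((l2_indicator_le _ v).trans hv))

lemma sq_sub_two_mul_le_sq {a e L : ℝ} (ha : 0 ≤ a) (he : 0 ≤ e) (hL : 0 ≤ L)
    (h : a ≤ L + e) : a ^ 2 - 2 * a * e ≤ L ^ 2 := by
  rcases le_total a e with hae | hae
  · nlinarith
  · nlinarith

lemma SatisfiesRIP.add_of_l2_mulVec_le {m n K : ℕ} {A E : Matrix (Fin m) (Fin n) ℝ} {δ η : ℝ}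
    (h : SatisfiesRIP A K δ) (hE : ∀ v, IsSparse K v → l2 (E *ᵥ v) ≤ η * l2 v) :
    SatisfiesRIP (A + E) K ((√(1 + δ) + η) ^ 2 - 1) := by
  intro v hv
  have hAEv : l2 ((A + E) *ᵥ v) ≤ l2 (A *ᵥ v) + l2 (E *ᵥ v) := by
    rw [add_mulVec]; exact l2_add_le _ _
  have hAv : l2 (A *ᵥ v) ≤ l2 ((A + E) *ᵥ v) + l2 (E *ᵥ v) := by
    simpa only [add_mulVec, add_sub_cancel_right] using l2_sub_le ((A + E) *ᵥ v) (E *ᵥ v)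
  have hcross := sq_sub_two_mul_le_sq (l2_nonneg _) (l2_nonneg _) (l2_nonneg _) hAv
  have hs : 1 + δ ≤ √(1 + δ) ^ 2 := Real.sq_sqrt' ▸ le_max_left _ _
  set s := √(1 + δ)
  set t := l2 v
  have ha := h.l2_mulVec_le hv
  have he := hE v hv
  have hEv := l2_nonneg (E *ᵥ v)
  have hst : 0 ≤ s * t := mul_nonneg (Real.sqrt_nonneg _) (l2_nonneg v)
  constructor
  · calc (1 - ((s + η) ^ 2 - 1)) * t ^ 2
        ≤ (1 - δ) * t ^ 2 - 2 * (s * t) * (η * t) := by nlinarith [sq_nonneg (η * t)]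
      _ ≤ l2 (A *ᵥ v) ^ 2 - 2 * l2 (A *ᵥ v) * l2 (E *ᵥ v) := by
        nlinarith [(h v hv).1, mul_le_mul ha he hEv hst]
      _ ≤ l2 ((A + E) *ᵥ v) ^ 2 := hcross
  · calc l2 ((A + E) *ᵥ v) ^ 2
        ≤ (l2 (A *ᵥ v) + l2 (E *ᵥ v)) ^ 2 := pow_le_pow_left₀ (l2_nonneg _) hAEv 2
      _ ≤ ((s + η) * t) ^ 2 := pow_le_pow_left₀ (add_nonneg (l2_nonneg _) hEv) (by linarith) 2
      _ = (1 + ((s + η) ^ 2 - 1)) * t ^ 2 := by ring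

theorem stmt2_general {m n : ℕ} (A E : Matrix (Fin m) (Fin n) ℝ) (K : ℕ) (δ : ℝ)
    (h : SatisfiesRIP A K δ) (hA : 0 < subNorm A K) :
    SatisfiesRIP (A + E) K ((1 + δ) * (1 + subNorm E K / subNorm A K) ^ 2 - 1) := by
  set ε := subNorm E K / subNorm A K
  have hε : 0 ≤ ε := div_nonneg (subNorm_nonneg E K) hA.le
  have hAδ := h.subNorm_le_sqrt
  have hδ : 0 ≤ 1 + δ := (Real.sqrt_pos.mp (hA.trans_le hAδ)).le
  have hE : ∀ v, IsSparse K v → l2 (E *ᵥ v) ≤ ε * √(1 + δ) * l2 v := fun v hv =>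
    calc l2 (E *ᵥ v) ≤ subNorm E K * l2 v := l2_mulVec_le_subNorm E (le_of_subNorm_pos hA) hv
      _ = ε * subNorm A K * l2 v := by rw [div_mul_cancel₀ _ hA.ne']
      _ ≤ ε * √(1 + δ) * l2 v := by have := l2_nonneg v; gcongr
  convert h.add_of_l2_mulVec_le hE using 2
  linear_combination (1 + ε) ^ 2 * (Real.sq_sqrt hδ).symm

/-- RIP of the perturbed matrix `A + E` with constant `(1+δ)(1+ε)² - 1`,
where `ε = ‖E‖₂^{(K)} / ‖A‖₂^{(K)}`. -/
theorem stmt2 {m n : ℕ} (A E : Matrix (Fin m) (Fin n) ℝ) (K : ℕ) (δ : ℝ) (hδ : 0 ≤ δ)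
    (h : SatisfiesRIP A K δ) (hA : 0 < subNorm A K) :
    SatisfiesRIP (A + E) K ((1 + δ) * (1 + subNorm E K / subNorm A K) ^ 2 - 1) :=
  stmt2_general A E K δ h hA
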